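/- arXiv:2507.10782 — 5 statements merged into one kernel-verified Lean document; each statement's English description precedes it below -/
import Mathlib

section
/- If $D$ is an integral domain and $G$ is a finite group acting on $D$ by ring automorphisms, then the field of fractions of the fixed ring $D^G$ is isomorphic to the fixed field $(\mathrm{Frac}\,D)^G$ of the induced $G$-action on the field of fractions of $D$. -/
/-! A nonzero `y : D` divides its norm `∏ g, g • y`, which lies in `D^G`; multiplying numerator and
denominator by the cofactor turns any `x / y` in `Frac D` into a fraction with denominator in
`D^G`, whose numerator is then `G`-fixed whenever the fraction is (Mathlib's
`IsFractionRing.isInvariant` runs this argument through the integrality of `D` over `D^G`).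
So `Frac (D^G) → Frac D` is a field embedding whose image is exactly the fixed field. -/

/-- The subring of a ring `R` fixed pointwise by a multiplicative action of `G`. -/
def fixedSubring (G : Type*) (R : Type*) [Monoid G] [Ring R] [MulSemiringAction G R] :
    Subring R where
  carrier := {x : R | ∀ g : G, g • x = x}
  one_mem' := fun g => smul_one g
  mul_mem' := fun {a b} ha hb g => by rw [smul_mul', ha g, hb g]
  add_mem' := fun {a b} ha hb g => by rw [smul_add, ha g, hb g]
  zero_mem' := fun g => smul_zero g
  neg_mem' := fun {a} ha g => by rw [smul_neg, ha g]

section FixedSubring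

variable (G R : Type*) [CommRing R]

instance fixedSubring.smulCommClass [Monoid G] [MulSemiringAction G R] :
    SMulCommClass G (fixedSubring G R) R :=
  ⟨fun g a r => by rw [Subring.smul_def, smul_eq_mul, smul_mul', a.2 g]; rfl⟩

instance fixedSubring.isInvariant [Group G] [MulSemiringAction G R] :
    Algebra.IsInvariant (fixedSubring G R) R G :=
  ⟨fun r hr => ⟨⟨r, hr⟩, rfl⟩⟩

end FixedSubring

theorem SMulDistribClass.of_smul_algebraMap {G R S : Type*} [Monoid G] [CommSemiring R]
    [Semiring S] [Algebra R S] [MulSemiringAction G R] [MulSemiringAction G S]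
    (h : ∀ (g : G) (r : R), g • algebraMap R S r = algebraMap R S (g • r)) :
    SMulDistribClass G R S :=
  ⟨fun g r s => by rw [Algebra.smul_def, Algebra.smul_def, smul_mul', h]⟩

section FractionRing

variable (G R L : Type*) [Group G] [Finite G] [CommRing R] [IsDomain R] [MulSemiringAction G R]
  [Field L] [Algebra R L] [IsFractionRing R L] [MulSemiringAction G L] [SMulDistribClass G R L]

attribute [local instance] FractionRing.liftAlgebra

theorem fieldRange_algebraMap_fractionRing_fixedSubring :
    (algebraMap (FractionRing (fixedSubring G R)) L).fieldRange = FixedPoints.subfield G L := by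
  have := IsFractionRing.smulCommClass G (fixedSubring G R) R (FractionRing (fixedSubring G R)) L
  have := IsFractionRing.isInvariant G (fixedSubring G R) R (FractionRing (fixedSubring G R)) L
  ext x
  refine ⟨?_, fun hx => Algebra.IsInvariant.isInvariant x hx⟩
  rintro ⟨k, rfl⟩ g
  exact smul_algebraMap g k

noncomputable def fractionRingFixedSubringEquiv :
    FractionRing (fixedSubring G R) ≃+* FixedPoints.subfield G L :=
  (algebraMap _ L).rangeRestrictFieldEquiv.trans
    (RingEquiv.subfieldCongr (fieldRange_algebraMap_fractionRing_fixedSubring G R L))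

end FractionRing

/-- If `D` is an integral domain and `G` a finite group acting on `D` by ring automorphisms,
then the field of fractions of the fixed ring `D^G` is isomorphic to the fixed field
`(Frac D)^G` of the induced action on any fraction field `L` of `D`. -/
theorem fractionRing_of_fixedSubring (D : Type*) [CommRing D] [IsDomain D]
    (G : Type*) [Group G] [Finite G] [MulSemiringAction G D]
    (L : Type*) [Field L] [Algebra D L] [IsFractionRing D L] [MulSemiringAction G L]
    (hcompat : ∀ (g : G) (d : D), g • (algebraMap D L d) = algebraMap D L (g • d)) :
    Nonempty (FractionRing ↥(fixedSubring G D) ≃+* ↥(FixedPoints.subfield G L)) :=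
  have := SMulDistribClass.of_smul_algebraMap hcompat
  ⟨fractionRingFixedSubringEquiv G D L⟩
end

section
/- Let $R$ be a ring and $S$ a left Ore set of regular elements such that $R_S$ is a semisimple (Artinian) ring. Then $R$ is semiprime (has no nonzero nilpotent two-sided ideals). -/
/-- Common left denominator lemma: finitely many elements of the localization
admit a common left denominator. -/
theorem common_denom_aux {R Q : Type*} [Ring R] [Ring Q]
    (S : Submonoid R)
    (hOre : ∀ (r : R), ∀ s ∈ S, ∃ r' : R, ∃ s' ∈ S, s' * r = r' * s)
    (f : R →+* Q)
    (hsurj : ∀ q : Q, ∃ r : R, ∃ s ∈ S, ∃ u : Qˣ, (u : Q) = f s ∧ q = ↑u⁻¹ * f r) :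
    ∀ (n : ℕ) (p : Fin n → Q), ∃ σ ∈ S, ∀ i, ∃ r : R, f σ * p i = f r := by
  intro n
  induction n with
  | zero => exact fun p => ⟨1, S.one_mem, fun i => i.elim0⟩
  | succ m ih =>
    intro p
    obtain ⟨σ, hσS, hσ⟩ := ih (fun i => p i.succ)
    obtain ⟨r₀, s₀, hs₀S, u, hu, hp0⟩ := hsurj (p 0)
    obtain ⟨r', s', hs'S, hOre'⟩ := hOre σ s₀ hs₀S
    refine ⟨s' * σ, S.mul_mem hs'S hσS, fun i => ?_⟩
    refine Fin.cases ?_ (fun j => ?_) i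
    · refine ⟨r' * r₀, ?_⟩
      have h1 : f (s' * σ) = f r' * (u : Q) := by
        rw [hu, ← map_mul, hOre']
      rw [hp0, h1, map_mul, mul_assoc, ← mul_assoc (u : Q), Units.mul_inv, one_mul]
    · obtain ⟨r, hr⟩ := hσ j
      refine ⟨s' * r, ?_⟩
      rw [map_mul, map_mul, mul_assoc, hr]

/-- Let `R` be a ring with a left Ore set `S` of regular elements whose left Ore
localization `Q = S⁻¹R` is a semisimple (Artinian) ring. Then `R` is semiprime. -/
theorem semiprime_of_semisimple_localization (R Q : Type*) [Ring R] [Ring Q]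
    (S : Submonoid R)
    (hreg : ∀ s ∈ S, ∀ a : R, (s * a = 0 → a = 0) ∧ (a * s = 0 → a = 0))
    (hOre : ∀ (r : R), ∀ s ∈ S, ∃ r' : R, ∃ s' ∈ S, s' * r = r' * s)
    (f : R →+* Q) (hunit : ∀ s ∈ S, IsUnit (f s))
    (hsurj : ∀ q : Q, ∃ r : R, ∃ s ∈ S, ∃ u : Qˣ, (u : Q) = f s ∧ q = ↑u⁻¹ * f r)
    (hker : ∀ r : R, f r = 0 → ∃ s ∈ S, s * r = 0)
    (hss : IsSemisimpleRing Q) :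
    ∀ a : R, (∀ r : R, a * r * a = 0) → a = 0 := by
  intro a ha
  -- f is injective
  have hinj : ∀ r : R, f r = 0 → r = 0 := by
    intro r h
    obtain ⟨s, hsS, hs⟩ := hker r h
    exact (hreg s hsS r).1 hs
  -- the two-sided ideal of Q generated by f a, as a left ideal
  set X : Set Q := {x | ∃ q : Q, x = f a * q} with hX
  set V : Submodule Q Q := Submodule.span Q X with hV
  -- V is stable under right multiplication
  have hVr : ∀ x ∈ V, ∀ q : Q, x * q ∈ V := by
    intro x hx q
    induction hx using Submodule.span_induction with
    | mem y hy =>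
      obtain ⟨q', rfl⟩ := hy
      exact Submodule.subset_span ⟨q' * q, by rw [mul_assoc]⟩
    | zero => rw [zero_mul]; exact V.zero_mem
    | add y z _ _ hy hz => rw [add_mul]; exact V.add_mem hy hz
    | smul p y _ hy =>
      rw [smul_eq_mul, mul_assoc]
      exact V.smul_mem p hy
  have hfaV : f a ∈ V := Submodule.subset_span ⟨1, by rw [mul_one]⟩
  -- semisimplicity: V has a complement, giving a right identity c for V
  haveI : IsSemisimpleRing Q := hss
  obtain ⟨W, hW⟩ := exists_isCompl V
  have h1top : (1 : Q) ∈ V ⊔ W := by rw [hW.sup_eq_top]; trivial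
  obtain ⟨c, hcV, w, hwW, hcw⟩ := Submodule.mem_sup.1 h1top
  have hri : ∀ x ∈ V, x * c = x := by
    intro x hx
    have hxw : x * w ∈ V ⊓ W := by
      constructor
      · have hx1 : x * c + x * w = x := by rw [← mul_add, hcw, mul_one]
        rw [eq_sub_of_add_eq' hx1]
        exact V.sub_mem hx (V.smul_mem x hcV)
      · exact W.smul_mem x hwW
    rw [hW.inf_eq_bot] at hxw
    have hx0 : x * w = 0 := hxw
    have : x * (c + w) = x := by rw [hcw, mul_one]
    rw [mul_add, hx0, add_zero] at this
    exact this
  -- write c as a finite combination of generators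
  obtain ⟨n, p, g, hsum⟩ := Submodule.mem_span_set'.1 hcV
  -- common denominator
  obtain ⟨σ, hσS, hden⟩ := common_denom_aux S hOre f hsurj n p
  choose rr hrr using hden
  choose qq hqq using fun i => (g i).2
  -- key computation : f a * (f σ * c) = 0
  have hkey : f a * (f σ * c) = 0 := by
    rw [← hsum, Finset.mul_sum, Finset.mul_sum]
    refine Finset.sum_eq_zero fun i _ => ?_
    calc f a * (f σ * (p i • (g i : Q)))
        = f a * (f (rr i) * (f a * qq i)) := by
          rw [smul_eq_mul, ← mul_assoc (f σ), hrr i, hqq i]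
      _ = f a * f (rr i) * f a * qq i := by
          rw [mul_assoc, mul_assoc]
      _ = f (a * rr i * a) * qq i := by rw [map_mul, map_mul]
      _ = 0 := by rw [ha (rr i), map_zero, zero_mul]
  -- f (a * σ) ∈ V, so it's fixed by right multiplication by c
  have hfaσ : f (a * σ) = 0 := by
    have hmem : f a * f σ ∈ V := hVr (f a) hfaV (f σ)
    have := hri (f a * f σ) hmem
    rw [mul_assoc, hkey] at this
    rw [map_mul, ← this]
  -- conclude
  have haσ : a * σ = 0 := hinj _ hfaσ
  exact (hreg σ hσS a).2 haσ
end

section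
/- Let $R$ be a left Noetherian ring and $\theta$ a ring automorphism of $R$. Then the Krull dimension (in the sense of Gabriel–Rentschler) of the skew polynomial ring $R[x;\theta]$ equals $\mathcal{K}(R) + 1$. -/
/-- Gabriel–Rentschler Krull dimension: `ModKrullLE R α M` means `M ∈ 𝒦_α`,
i.e. in every countable descending chain of submodules, all but finitely many factors
are either zero or have Krull dimension `< α`. -/
noncomputable def ModKrullLE (R : Type) [Ring R] : Ordinal.{0} → (M : Type) → [AddCommGroup M] → [Module R M] → Prop :=
  fun α M _ _ =>
  ∀ f : ℕ → Submodule R M, (∀ i, f (i + 1) ≤ f i) →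
    {i : ℕ | f (i + 1) ≠ f i ∧
      ¬ ∃ β : Ordinal.{0}, ∃ _ : β < α,
        ModKrullLE R β (↥(f i) ⧸ Submodule.comap (f i).subtype (f (i + 1)))}.Finite
termination_by α M => α

open scoped Classical in
/-- The Gabriel–Rentschler Krull dimension of a module: `⊥` (i.e. `-1`) for the zero module,
otherwise the least ordinal `α` with `M ∈ 𝒦_α`. -/
noncomputable def modKrullDim (R : Type) [Ring R] (M : Type) [AddCommGroup M] [Module R M] :
    WithBot Ordinal.{0} :=
  if Subsingleton M then ⊥ else ↑(sInf {α : Ordinal | ModKrullLE R α M})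

/-!
We argue with the deviation of posets: `𝒦(M)` is the deviation of the lattice of submodules
of `M`. Elements of `T` are written `t = ∑ ι(tₙ) xⁿ`.

Upper bound: a left ideal `I` of `T` is determined, among the left ideals containing it, by its
ideals of leading coefficients `Lₙ(I) = θ⁻ⁿ {lc g : g ∈ I, deg g ≤ n}`, which increase with `n`.
So the left ideals of `T` embed strictly monotonically into the monotone sequences of left ideals
of `R`, and the deviation of the latter is at most `𝒦(R) + 1` because ascending chains of left
ideals of `R` stabilise.

Lower bound: the left ideals `{t | tₖ = 0 for k < n}` form a strictly descending chain, and
`J ↦ {t | tₖ = 0 for k < n, tₙ ∈ J}` embeds the left ideals of `R` into each of its steps; some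
step has deviation below `𝒦(T)`, hence `𝒦(R) < 𝒦(T)`.
-/

open Set

/-- The deviation of the poset `P` (McConnell–Robson, 6.1.2) is at most `α`; thus
`ModKrullLE R α M` is `DeviationLE α (Submodule R M)`. -/
def DeviationLE : Ordinal.{0} → (P : Type) → [PartialOrder P] → Prop :=
  fun α P _ =>
  ∀ f : ℕ → P, Antitone f →
    {i : ℕ | f (i + 1) ≠ f i ∧
      ¬ ∃ β, ∃ _ : β < α, DeviationLE β (Icc (f (i + 1)) (f i))}.Finite
termination_by α => α

theorem deviationLE_iff {α : Ordinal.{0}} {P : Type} [PartialOrder P] :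
    DeviationLE α P ↔ ∀ f : ℕ → P, Antitone f →
      {i : ℕ | f (i + 1) ≠ f i ∧
        ¬ ∃ β, ∃ _ : β < α, DeviationLE β (Icc (f (i + 1)) (f i))}.Finite := by
  rw [DeviationLE]

def iccProdOrderEmbedding {P Q : Type} [PartialOrder P] [PartialOrder Q] (a b : P × Q) :
    Icc a b ↪o Icc a.1 b.1 × Icc a.2 b.2 :=
  OrderEmbedding.ofMapLEIff (fun y => (⟨y.1.1, y.2.1.1, y.2.2.1⟩, ⟨y.1.2, y.2.1.2, y.2.2.2⟩))
    fun _ _ => Iff.rfl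

namespace DeviationLE

variable {α β : Ordinal.{0}} {P Q : Type} [PartialOrder P] [PartialOrder Q]

theorem mono (hαβ : α ≤ β) (h : DeviationLE α P) : DeviationLE β P := by
  rw [deviationLE_iff] at h ⊢
  exact fun f hf => (h f hf).subset fun i ⟨hne, hbad⟩ =>
    ⟨hne, fun ⟨γ, hγ, hγP⟩ => hbad ⟨γ, hγ.trans_le hαβ, hγP⟩⟩

theorem of_subsingleton [Subsingleton P] (α : Ordinal.{0}) : DeviationLE α P := by
  rw [deviationLE_iff]
  exact fun f _ => finite_empty.subset fun i hi => hi.1 (Subsingleton.elim _ _)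

theorem of_strictMono (g : Q → P) (hg : StrictMono g) (h : DeviationLE α P) :
    DeviationLE α Q := by
  induction α using WellFoundedLT.induction generalizing P Q with
  | _ α ih =>
  rw [deviationLE_iff] at h ⊢
  intro f hf
  refine (h (g ∘ f) (hg.monotone.comp_antitone hf)).subset fun i ⟨hne, hbad⟩ =>
    ⟨(hg ((hf i.le_succ).lt_of_ne hne)).ne, ?_⟩
  rintro ⟨β, hβ, hβP⟩
  refine hbad ⟨β, hβ, ih β hβ (fun y => ⟨g y, hg.monotone y.2.1, hg.monotone y.2.2⟩) ?_ hβP⟩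
  exact fun y z hyz => Subtype.mk_lt_mk.mpr (hg hyz)

theorem prod (hP : DeviationLE α P) (hQ : DeviationLE α Q) : DeviationLE α (P × Q) := by
  induction α using WellFoundedLT.induction generalizing P Q with
  | _ α ih =>
  rw [deviationLE_iff] at hP hQ ⊢
  intro f hf
  refine ((hP _ fun _ _ hij => (hf hij).1).union (hQ _ fun _ _ hij => (hf hij).2)).subset
    fun i ⟨hne, hbad⟩ => ?_
  by_contra hgood
  simp only [mem_union, mem_ofPred_eq, not_or, not_and_or, not_not] at hgood
  have hshort : ∀ β < α, DeviationLE β (Icc (f (i + 1)).1 (f i).1) →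
      DeviationLE β (Icc (f (i + 1)).2 (f i).2) → False := fun β hβ h₁ h₂ =>
    hbad ⟨β, hβ, (ih β hβ h₁ h₂).of_strictMono _ (iccProdOrderEmbedding _ _).strictMono⟩
  obtain ⟨h₁ | ⟨β₁, hβ₁, hP'⟩, h₂ | ⟨β₂, hβ₂, hQ'⟩⟩ := hgood
  · exact hne (Prod.ext h₁ h₂)
  · exact hshort β₂ hβ₂ (h₁ ▸ of_subsingleton _) hQ'
  · exact hshort β₁ hβ₁ hP' (h₂ ▸ of_subsingleton _)
  · exact hshort (max β₁ β₂) (max_lt hβ₁ hβ₂) (hP'.mono (le_max_left _ _))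
      (hQ'.mono (le_max_right _ _))

theorem pi_fin (h : DeviationLE α P) (n : ℕ) : DeviationLE α (Fin n → P) := by
  induction n with
  | zero => exact of_subsingleton α
  | succ n ih =>
    exact (h.prod ih).of_strictMono _ (Fin.consOrderIso fun _ => P).symm.strictMono

/-- An element of `[G, G']` is determined by its first `n` terms and by its tail, which lies
in `[a, b]`. -/
theorem Icc_orderHom {G G' : ℕ →o P} {n : ℕ} {a b : P} (hG : ∀ k ≥ n, G k = a)
    (hG' : ∀ k ≥ n, G' k = b) (hP : DeviationLE α P) (hab : DeviationLE α (ℕ →o Icc a b)) :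
    DeviationLE α (Icc G G') := by
  refine ((hP.pi_fin n).prod hab).of_strictMono
    (fun H => ((fun k : Fin n => H.1 k),
      ⟨fun j => ⟨H.1 (n + j), hG (n + j) (by omega) ▸ H.2.1 _, hG' (n + j) (by omega) ▸ H.2.2 _⟩,
        fun j j' h => H.1.mono (by omega)⟩)) ?_
  refine Monotone.strictMono_of_injective (fun H H' h => ⟨fun k => h k, fun j => h (n + j)⟩)
    fun H H' h => Subtype.ext (OrderHom.ext _ _ (funext fun k => ?_))
  rcases lt_or_ge k n with hk | hk
  · exact congrFun (congrArg Prod.fst h) ⟨k, hk⟩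
  · obtain ⟨j, rfl⟩ := Nat.exists_eq_add_of_le hk
    exact congrArg (fun t => (t.2 j).1) h

/-- The terms of a descending chain of monotone sequences `F m` stabilise at limits `W m`, and the
step from `F (i + 1)` to `F i` eventually agrees with the step from `W (i + 1)` to `W i`. -/
theorem orderHom [WellFoundedGT P] (h : DeviationLE α P) : DeviationLE (α + 1) (ℕ →o P) := by
  induction α using WellFoundedLT.induction generalizing P with
  | _ α ih =>
  refine deviationLE_iff.mpr fun F hF => ?_
  choose ν hν using fun m => wellFoundedGT_iff_monotone_chain_condition.mp ‹_› (F m)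
  set W : ℕ → P := fun m => F m (ν m)
  have hW : Antitone W := fun m m' hmm' => calc
    W m' = F m' (max (ν m) (ν m')) := hν m' _ (le_max_right _ _)
    _ ≤ F m (max (ν m) (ν m')) := hF hmm' _
    _ = W m := (hν m _ (le_max_left _ _)).symm
  refine (deviationLE_iff.mp h W hW).subset fun i ⟨_, hbad⟩ => ?_
  have htail : DeviationLE α (ℕ →o Icc (W (i + 1)) (W i)) → False := fun htail =>
    hbad ⟨α, Order.lt_add_one_iff.mpr le_rfl, Icc_orderHom (n := max (ν i) (ν (i + 1)))
      (fun k hk => (hν _ k (le_of_max_le_right hk)).symm)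
      (fun k hk => (hν _ k (le_of_max_le_left hk)).symm) h htail⟩
  by_contra hgood
  simp only [mem_ofPred_eq, not_and_or, not_not] at hgood
  rcases hgood with heq | ⟨β, hβ, hβW⟩
  · have : Subsingleton (ℕ →o Icc (W (i + 1)) (W i)) := by
      rw [heq]
      exact DFunLike.coe_injective.subsingleton
    exact htail (of_subsingleton α)
  · exact htail ((ih β hβ hβW).mono (Order.add_one_le_iff.mpr hβ))

end DeviationLE

section Existence

variable {P : Type} [PartialOrder P]

/-- Only a step ending at `a` can escape the induction hypothesis, and a chain has at most one
such step. -/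
theorem exists_deviationLE_Ici [WellFoundedGT P] (a : P) : ∃ α, DeviationLE α (Ici a) := by
  induction a using WellFoundedGT.induction with
  | _ a ih =>
  choose! γ hγ using ih
  set α := ⨆ b : Ioi a, γ b
  have hγα : ∀ b, a < b → γ b < α + 1 := fun b hb =>
    Order.lt_add_one_iff.mpr (le_ciSup Ordinal.bddAbove_of_small (⟨b, hb⟩ : Ioi a))
  refine ⟨α + 1, deviationLE_iff.mpr fun f hf => ?_⟩
  have hbad : ∀ i ∈ {i : ℕ | f (i + 1) ≠ f i ∧
      ¬ ∃ β, ∃ _ : β < α + 1, DeviationLE β (Icc (f (i + 1)) (f i))}, (f (i + 1) : P) = a := by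
    rintro i ⟨-, hbad⟩
    by_contra hne
    have hlt : a < f (i + 1) := lt_of_le_of_ne (f (i + 1)).2 (Ne.symm hne)
    exact hbad ⟨γ (f (i + 1)), hγα _ hlt,
      (hγ _ hlt).of_strictMono (fun y => ⟨y.1.1, y.2.1⟩) fun _ _ h => h⟩
  refine Set.Subsingleton.finite fun i hi j hj => ?_
  by_contra hij
  wlog hlt : i < j generalizing i j
  · exact this j hj i hi (Ne.symm hij) (lt_of_le_of_ne (not_lt.mp hlt) (Ne.symm hij))
  refine hj.1 (le_antisymm (hf j.le_succ) ?_)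
  calc (f j : P) ≤ f (i + 1) := hf hlt
    _ = a := hbad i hi
    _ ≤ f (j + 1) := (f (j + 1)).2

theorem exists_deviationLE [OrderBot P] [WellFoundedGT P] : ∃ α, DeviationLE α P :=
  let ⟨α, h⟩ := exists_deviationLE_Ici (⊥ : P)
  ⟨α, h.of_strictMono (fun p => ⟨p, bot_le⟩) fun _ _ h => h⟩

end Existence

namespace Submodule

variable {R M : Type} [Ring R] [AddCommGroup M] [Module R M]

def quotientComapSubtypeOrderIso {p q : Submodule R M} (h : q ≤ p) :
    Submodule R (p ⧸ q.comap p.subtype) ≃o Icc q p :=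
  (comapMkQRelIso _).trans
  { toFun m := ⟨m.1.map p.subtype,
      ((map_comap_subtype p q).trans (inf_eq_right.mpr h)).symm.trans_le (map_mono m.2),
      map_subtype_le _ _⟩
    invFun s := ⟨s.1.comap p.subtype, comap_mono s.2.1⟩
    left_inv _ := Subtype.ext (comap_map_eq_of_injective p.injective_subtype _)
    right_inv s := Subtype.ext ((map_comap_subtype _ _).trans (inf_eq_right.mpr s.2.2))
    map_rel_iff' := map_le_map_iff_of_injective p.injective_subtype _ _ }

end Submodule

theorem modKrullLE_iff_deviationLE {R M : Type} [Ring R] [AddCommGroup M] [Module R M]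
    {α : Ordinal.{0}} : ModKrullLE R α M ↔ DeviationLE α (Submodule R M) := by
  induction α using WellFoundedLT.induction generalizing M with
  | _ α ih =>
  rw [ModKrullLE, deviationLE_iff]
  refine ⟨fun h f hf => ?_, fun h f hf => ?_⟩
  · refine (h f fun i => hf i.le_succ).subset fun i ⟨hne, hbad⟩ => ⟨hne, ?_⟩
    rintro ⟨β, hβ, hβM⟩
    let e := Submodule.quotientComapSubtypeOrderIso (hf i.le_succ)
    exact hbad ⟨β, hβ, ((ih β hβ).mp hβM).of_strictMono e.symm e.symm.strictMono⟩
  · refine (h f (antitone_nat_of_succ_le hf)).subset fun i ⟨hne, hbad⟩ => ⟨hne, ?_⟩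
    rintro ⟨β, hβ, hβM⟩
    let e := Submodule.quotientComapSubtypeOrderIso (hf i)
    exact hbad ⟨β, hβ, (ih β hβ).mpr (hβM.of_strictMono e e.strictMono)⟩

theorem exists_modKrullLE (R M : Type) [Ring R] [AddCommGroup M] [Module R M]
    [IsNoetherian R M] : ∃ α, ModKrullLE R α M :=
  let ⟨α, h⟩ := exists_deviationLE (P := Submodule R M)
  ⟨α, modKrullLE_iff_deviationLE.mpr h⟩

structure IsSkewPolynomialRing {R T : Type} [Ring R] [Ring T] (θ : R ≃+* R) (ι : R →+* T)
    (x : T) : Prop where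
  mul_iota : ∀ r : R, x * ι r = ι (θ r) * x
  existsUnique_sum : ∀ t : T, ∃! c : ℕ →₀ R, t = c.sum fun n r => ι r * x ^ n

namespace IsSkewPolynomialRing

variable {R T : Type} [Ring R] [Ring T] {θ : R ≃+* R} {ι : R →+* T} {x : T}

noncomputable def coeff (hT : IsSkewPolynomialRing θ ι x) : T ≃+ (ℕ →₀ R) :=
  (AddEquiv.ofBijective
    (Finsupp.liftAddHom fun n => (AddMonoidHom.mulRight (x ^ n)).comp ι.toAddMonoidHom)
    ((Function.bijective_iff_existsUnique _).mpr fun t => by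
      simpa [Finsupp.liftAddHom_apply, eq_comm, Function.comp_def]
        using hT.existsUnique_sum t)).symm

theorem coeff_symm_apply (hT : IsSkewPolynomialRing θ ι x) (c : ℕ →₀ R) :
    hT.coeff.symm c = c.sum fun n r => ι r * x ^ n := by
  simp [coeff, Finsupp.liftAddHom_apply, Function.comp_def]

theorem sum_coeff (hT : IsSkewPolynomialRing θ ι x) (t : T) :
    (hT.coeff t).sum (fun n r => ι r * x ^ n) = t := by
  rw [← hT.coeff_symm_apply, AddEquiv.symm_apply_apply]

theorem coeff_sum (hT : IsSkewPolynomialRing θ ι x) (c : ℕ →₀ R) :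
    hT.coeff (c.sum fun n r => ι r * x ^ n) = c := by
  rw [← hT.coeff_symm_apply, AddEquiv.apply_symm_apply]

theorem coeff_monomial (hT : IsSkewPolynomialRing θ ι x) (r : R) (n : ℕ) :
    hT.coeff (ι r * x ^ n) = Finsupp.single n r := by
  rw [← hT.coeff_sum (Finsupp.single n r), Finsupp.sum_single_index (by simp)]

theorem pow_mul_iota (hT : IsSkewPolynomialRing θ ι x) (j : ℕ) (r : R) :
    x ^ j * ι r = ι ((θ ^ j) r) * x ^ j := by
  induction j generalizing r with
  | zero => simp
  | succ j ih =>
    rw [pow_succ', mul_assoc, ih, ← mul_assoc, hT.mul_iota, mul_assoc, ← pow_succ', pow_succ' θ]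
    rfl

theorem coeff_monomial_mul (hT : IsSkewPolynomialRing θ ι x) (r : R) (j : ℕ) (t : T) :
    hT.coeff (ι r * x ^ j * t) =
      ((hT.coeff t).mapRange (fun c => r * (θ ^ j) c) (by simp)).embDomain
        (addLeftEmbedding j) := by
  apply hT.coeff.symm.injective
  rw [AddEquiv.symm_apply_apply, hT.coeff_symm_apply, Finsupp.sum_embDomain,
    Finsupp.sum_mapRange_index (by simp)]
  conv_lhs => rw [← hT.sum_coeff t, Finsupp.mul_sum]
  refine Finsupp.sum_congr fun m _ => ?_
  rw [mul_assoc, ← mul_assoc (x ^ j), hT.pow_mul_iota, map_mul, addLeftEmbedding_apply, pow_add]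
  simp only [mul_assoc]

theorem coeff_monomial_mul_add (hT : IsSkewPolynomialRing θ ι x) (r : R) (j : ℕ) (t : T)
    (m : ℕ) : hT.coeff (ι r * x ^ j * t) (j + m) = r * (θ ^ j) (hT.coeff t m) := by
  rw [hT.coeff_monomial_mul]
  exact Finsupp.embDomain_apply_self (addLeftEmbedding j) _ m

theorem coeff_monomial_mul_of_lt (hT : IsSkewPolynomialRing θ ι x) (r : R) {j m : ℕ} (t : T)
    (h : m < j) : hT.coeff (ι r * x ^ j * t) m = 0 := by
  rw [hT.coeff_monomial_mul, Finsupp.embDomain_of_notMem_range]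
  rintro ⟨k, rfl⟩
  simp at h

theorem coeff_monomial_mul_of_lt_add (hT : IsSkewPolynomialRing θ ι x) (r : R) {j n k : ℕ}
    {t : T} (ht : ∀ m < n, hT.coeff t m = 0) (hk : k < j + n) :
    hT.coeff (ι r * x ^ j * t) k = 0 := by
  rcases lt_or_ge k j with hkj | hkj
  · exact hT.coeff_monomial_mul_of_lt r t hkj
  · obtain ⟨m, rfl⟩ := Nat.exists_eq_add_of_le hkj
    rw [hT.coeff_monomial_mul_add, ht m (by omega), map_zero, mul_zero]

theorem coeff_iota_mul (hT : IsSkewPolynomialRing θ ι x) (r : R) (t : T) (m : ℕ) :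
    hT.coeff (ι r * t) m = r * hT.coeff t m := by
  simpa using hT.coeff_monomial_mul_add r 0 t m

theorem coeff_x_mul_add_one (hT : IsSkewPolynomialRing θ ι x) (t : T) (m : ℕ) :
    hT.coeff (x * t) (m + 1) = θ (hT.coeff t m) := by
  simpa [add_comm] using hT.coeff_monomial_mul_add 1 1 t m

theorem mul_mem_of_monomial_mul_mem (hT : IsSkewPolynomialRing θ ι x) {S : AddSubmonoid T}
    (hS : ∀ (r : R) (j : ℕ) (t : T), t ∈ S → ι r * x ^ j * t ∈ S) (s : T) {t : T}
    (ht : t ∈ S) : s * t ∈ S := by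
  rw [← hT.sum_coeff s, Finsupp.sum_mul]
  exact S.sum_mem fun j _ => hS _ j t ht

noncomputable def trailingIdeal (hT : IsSkewPolynomialRing θ ι x) (n : ℕ) (J : Submodule R R) :
    Submodule T T :=
  let S : AddSubmonoid T :=
    { carrier := {t | (∀ k < n, hT.coeff t k = 0) ∧ hT.coeff t n ∈ J}
      add_mem' := fun ⟨hs, hsJ⟩ ⟨ht, htJ⟩ =>
        ⟨fun k hk => by simp [hs k hk, ht k hk], by simpa using J.add_mem hsJ htJ⟩
      zero_mem' := by simp }
  have monomial_mul_mem (r : R) (j : ℕ) (t : T) (ht : t ∈ S) : ι r * x ^ j * t ∈ S := by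
    refine ⟨fun k hk => hT.coeff_monomial_mul_of_lt_add r ht.1 (by omega), ?_⟩
    rcases j with _ | j
    · simpa [hT.coeff_iota_mul] using J.smul_mem r ht.2
    · rw [hT.coeff_monomial_mul_of_lt_add r ht.1 (by omega)]
      exact J.zero_mem
  { S with smul_mem' := fun s _ ht => hT.mul_mem_of_monomial_mul_mem monomial_mul_mem s ht }

theorem mem_trailingIdeal (hT : IsSkewPolynomialRing θ ι x) {n : ℕ} {J : Submodule R R}
    {t : T} : t ∈ hT.trailingIdeal n J ↔ (∀ k < n, hT.coeff t k = 0) ∧ hT.coeff t n ∈ J :=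
  Iff.rfl

theorem iota_mul_pow_mem_trailingIdeal (hT : IsSkewPolynomialRing θ ι x) {n : ℕ}
    {J : Submodule R R} {r : R} : ι r * x ^ n ∈ hT.trailingIdeal n J ↔ r ∈ J := by
  simp +contextual [mem_trailingIdeal, hT.coeff_monomial, Nat.ne_of_gt]

theorem trailingIdeal_strictMono (hT : IsSkewPolynomialRing θ ι x) (n : ℕ) :
    StrictMono (hT.trailingIdeal n) :=
  Monotone.strictMono_of_injective (fun _ _ hJ _ ht => ⟨ht.1, hJ ht.2⟩) fun J J' h => by
    ext r
    rw [← hT.iota_mul_pow_mem_trailingIdeal, h, hT.iota_mul_pow_mem_trailingIdeal]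

theorem trailingIdeal_succ_top_le (hT : IsSkewPolynomialRing θ ι x) (n : ℕ)
    (J : Submodule R R) : hT.trailingIdeal (n + 1) ⊤ ≤ hT.trailingIdeal n J :=
  fun _ ⟨ht, _⟩ => ⟨fun k hk => ht k (by omega), by rw [ht n n.lt_succ_self]; exact J.zero_mem⟩

theorem exists_lt_modKrullLE [Nontrivial R] (hT : IsSkewPolynomialRing θ ι x)
    {γ : Ordinal.{0}} (h : ModKrullLE T γ T) : ∃ β < γ, ModKrullLE R β R := by
  rw [modKrullLE_iff_deviationLE, deviationLE_iff] at h
  set f : ℕ → Submodule T T := fun n => hT.trailingIdeal n ⊤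
  have hf : Antitone f := antitone_nat_of_succ_le fun n => hT.trailingIdeal_succ_top_le n ⊤
  obtain ⟨i, hi⟩ := (h f hf).infinite_compl.nonempty
  have hne : f (i + 1) ≠ f i := fun he => by
    have hx : ι 1 * x ^ i ∈ f (i + 1) := he ▸ hT.iota_mul_pow_mem_trailingIdeal.mpr trivial
    have hcoeff := hx.1 i i.lt_succ_self
    rw [hT.coeff_monomial, Finsupp.single_eq_same] at hcoeff
    exact one_ne_zero hcoeff
  obtain ⟨β, hβ, hβT⟩ := not_and_not_right.mp hi hne
  refine ⟨β, hβ, modKrullLE_iff_deviationLE.mpr (hβT.of_strictMono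
    (fun J => ⟨hT.trailingIdeal i J, hT.trailingIdeal_succ_top_le i J,
      (hT.trailingIdeal_strictMono i).monotone le_top⟩)
    fun _ _ hJ => hT.trailingIdeal_strictMono i hJ)⟩

/-- The leading coefficients of the elements of `I` of degree at most `n`, pulled back by
`θ ^ n` so that multiplication by `x` makes them increase with `n`. -/
noncomputable def leadingIdeal (hT : IsSkewPolynomialRing θ ι x) (I : Submodule T T) (n : ℕ) :
    Submodule R R where
  carrier := {c | ∃ g ∈ I, (∀ m > n, hT.coeff g m = 0) ∧ hT.coeff g n = (θ ^ n) c}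
  add_mem' := fun ⟨g, hg, hgn, hgc⟩ ⟨g', hg', hg'n, hg'c⟩ =>
    ⟨g + g', I.add_mem hg hg', fun m hm => by simp [hgn m hm, hg'n m hm], by simp [hgc, hg'c]⟩
  zero_mem' := ⟨0, I.zero_mem, by simp, by simp⟩
  smul_mem' := by
    rintro r c ⟨g, hg, hgn, hgc⟩
    exact ⟨ι ((θ ^ n) r) * g, I.smul_mem _ hg,
      fun m hm => by simp [hT.coeff_iota_mul, hgn m hm], by simp [hT.coeff_iota_mul, hgc]⟩

theorem leadingIdeal_le_succ (hT : IsSkewPolynomialRing θ ι x) (I : Submodule T T) (n : ℕ) :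
    hT.leadingIdeal I n ≤ hT.leadingIdeal I (n + 1) := fun c ⟨g, hg, hgn, hgc⟩ => by
  refine ⟨x * g, I.smul_mem x hg, fun m hm => ?_, ?_⟩
  · obtain ⟨m, rfl⟩ := Nat.exists_eq_add_of_lt hm
    rw [hT.coeff_x_mul_add_one, hgn _ (by omega), map_zero]
  · rw [hT.coeff_x_mul_add_one, hgc, pow_succ' θ]
    rfl

noncomputable def leadingIdeals (hT : IsSkewPolynomialRing θ ι x) (I : Submodule T T) :
    ℕ →o Submodule R R :=
  ⟨hT.leadingIdeal I, monotone_nat_of_le_succ (hT.leadingIdeal_le_succ I)⟩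

/-- Subtracting from `g ∈ I'` an element of `I` with the same leading coefficient lowers the
degree. -/
theorem eq_of_le_of_leadingIdeal_eq (hT : IsSkewPolynomialRing θ ι x) {I I' : Submodule T T}
    (hII' : I ≤ I') (h : ∀ n, hT.leadingIdeal I n = hT.leadingIdeal I' n) : I = I' := by
  refine le_antisymm hII' fun g hg => ?_
  suffices ∀ n, ∀ g ∈ I', (∀ m ≥ n, hT.coeff g m = 0) → g ∈ I by
    obtain ⟨n, hn⟩ := (hT.coeff g).support.exists_nat_subset_range
    exact this n g hg fun m hm => Finsupp.notMem_support_iff.mp fun hm' => by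
      simpa using (Finset.mem_range.mp (hn hm')).trans_le hm
  intro n
  induction n with
  | zero =>
    intro g _ hg
    rw [hT.coeff.map_eq_zero_iff.mp (Finsupp.ext fun m => hg m m.zero_le)]
    exact I.zero_mem
  | succ n ih =>
    intro g hg hgn
    obtain ⟨g', hg', hg'n, hg'c⟩ : (θ ^ n).symm (hT.coeff g n) ∈ hT.leadingIdeal I n :=
      h n ▸ ⟨g, hg, fun m hm => hgn m hm, (RingEquiv.apply_symm_apply _ _).symm⟩
    rw [RingEquiv.apply_symm_apply] at hg'c
    have hdiff : g - g' ∈ I := ih _ (I'.sub_mem hg (hII' hg')) fun m hm => by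
      rcases hm.eq_or_lt with rfl | hm
      · simp [hg'c]
      · simp [hgn m hm, hg'n m hm]
    simpa using I.add_mem hdiff hg'

theorem leadingIdeals_strictMono (hT : IsSkewPolynomialRing θ ι x) :
    StrictMono hT.leadingIdeals :=
  fun _ _ hII' => lt_of_le_of_ne (fun _ _ ⟨g, hg, hgn⟩ => ⟨g, hII'.le hg, hgn⟩) fun h =>
    hII'.ne (hT.eq_of_le_of_leadingIdeal_eq hII'.le fun n => DFunLike.congr_fun h n)

theorem modKrullLE_add_one [IsNoetherianRing R] (hT : IsSkewPolynomialRing θ ι x)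
    {δ : Ordinal.{0}} (h : ModKrullLE R δ R) : ModKrullLE T (δ + 1) T := by
  rw [modKrullLE_iff_deviationLE] at h ⊢
  exact h.orderHom.of_strictMono _ hT.leadingIdeals_strictMono

theorem sInf_modKrullLE_eq_add_one [IsNoetherianRing R] [Nontrivial R]
    (hT : IsSkewPolynomialRing θ ι x) :
    sInf {γ | ModKrullLE T γ T} = sInf {β | ModKrullLE R β R} + 1 := by
  have hR : ModKrullLE R (sInf {β | ModKrullLE R β R}) R := csInf_mem (exists_modKrullLE R R)
  refine le_antisymm (csInf_le' (hT.modKrullLE_add_one hR))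
    (le_csInf ⟨_, hT.modKrullLE_add_one hR⟩ fun γ hγ => ?_)
  obtain ⟨β, hβ, hβR⟩ := hT.exists_lt_modKrullLE hγ
  exact Order.add_one_le_iff.mpr ((csInf_le' (s := {β | ModKrullLE R β R}) hβR).trans_lt hβ)

end IsSkewPolynomialRing

/-- Let `R` be a left Noetherian ring and `θ` a ring automorphism of `R`. If `T` is the skew
polynomial ring `R[x; θ]` (axiomatized: `T` contains `R` via `ι`, has an element `x` with
`x · r = θ(r) · x`, and is free as a left `R`-module with basis `{xⁿ}`), then the
Gabriel–Rentschler Krull dimension of `T` equals that of `R` plus one. -/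
theorem krullDim_skew_polynomial (R T : Type) [Ring R] [Ring T] [IsNoetherianRing R]
    (θ : R ≃+* R) (ι : R →+* T) (x : T)
    (hcomm : ∀ r : R, x * ι r = ι (θ r) * x)
    (hbasis : ∀ t : T, ∃! c : ℕ →₀ R, t = c.sum fun n r => ι r * x ^ n) :
    (∃ α : Ordinal, ModKrullLE T α T) ∧ modKrullDim T T = modKrullDim R R + 1 := by
  have hT : IsSkewPolynomialRing θ ι x := ⟨hcomm, hbasis⟩
  rcases subsingleton_or_nontrivial R with hR | hR
  · have : Subsingleton T := hT.coeff.toEquiv.subsingleton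
    refine ⟨⟨0, modKrullLE_iff_deviationLE.mpr (DeviationLE.of_subsingleton 0)⟩, ?_⟩
    rw [modKrullDim, modKrullDim, if_pos this, if_pos hR, WithBot.bot_add]
  · have : Nontrivial T := hT.coeff.toEquiv.nontrivial
    obtain ⟨δ, hδ⟩ := exists_modKrullLE R R
    refine ⟨⟨δ + 1, hT.modKrullLE_add_one hδ⟩, ?_⟩
    rw [modKrullDim, modKrullDim, if_neg (not_subsingleton T), if_neg (not_subsingleton R),
      hT.sInf_modKrullLE_eq_add_one, WithBot.coe_add, WithBot.coe_one]
end

section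
/- Every ring $R$ that is finitely generated as a module over its center $Z(R)$ satisfies a polynomial identity, i.e. such an $R$ is a PI ring. -/
/-- A ring is a PI-ring if it satisfies a multilinear polynomial identity
`∑_σ c_σ x_{σ(1)} ⋯ x_{σ(n)} = 0` with `c_1 = 1` (by linearization, every ring
satisfying a polynomial identity with some coefficient `1` satisfies one of this form). -/
def IsPIRing (R : Type*) [Ring R] : Prop :=
  ∃ (n : ℕ) (c : Equiv.Perm (Fin (n + 1)) → ℤ), c 1 = 1 ∧
    ∀ x : Fin (n + 1) → R,
      (∑ σ : Equiv.Perm (Fin (n + 1)), c σ • (List.ofFn (x ∘ σ)).prod) = 0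

/-- Every ring that is finitely generated as a module over its center satisfies a
polynomial identity. -/
theorem isPIRing_of_finite_over_center (R : Type*) [Ring R]
    [Module.Finite (Subring.center R) R] : IsPIRing R := by
  obtain ⟨n, g, hg⟩ := Module.Finite.exists_fin (R := Subring.center R) (M := R)
  refine ⟨n, fun σ => (Equiv.Perm.sign σ : ℤ), by simp, fun x => ?_⟩
  set F : R [⋀^Fin (n + 1)]→ₗ[Subring.center R] R :=
    MultilinearMap.alternatization
      (MultilinearMap.mkPiAlgebraFin (Subring.center R) (n + 1) R) with hFdef
  -- the sum in question equals `F x`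
  have key : (∑ σ : Equiv.Perm (Fin (n + 1)),
      ((Equiv.Perm.sign σ : ℤ)) • (List.ofFn (x ∘ σ)).prod) = F x := by
    rw [hFdef, MultilinearMap.alternatization_apply]
    refine Finset.sum_congr rfl fun σ _ => ?_
    rw [Units.smul_def, MultilinearMap.domDomCongr_apply,
      MultilinearMap.mkPiAlgebraFin_apply]
    rfl
  rw [key]
  -- write each `x i` as a combination of the generators
  have hx : ∀ i, ∃ c : Fin n → Subring.center R, ∑ j, c j • g j = x i := by
    intro i
    have : x i ∈ Submodule.span (Subring.center R) (Set.range g) := hg ▸ trivial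
    exact (Submodule.mem_span_range_iff_exists_fun _).mp this
  choose c hc using hx
  have hxc : x = fun i => ∑ j, c i j • g j := by
    funext i; rw [hc]
  rw [hxc]
  rw [show (F : (Fin (n+1) → R) → R) (fun i => ∑ j, c i j • g j)
      = F.toMultilinearMap (fun i => ∑ j, c i j • g j) from rfl,
    F.toMultilinearMap.map_sum (fun i j => c i j • g j)]
  refine Finset.sum_eq_zero fun r _ => ?_
  rw [F.toMultilinearMap.map_smul_univ]
  have : ¬ Function.Injective r := by
    intro hr
    have := Fintype.card_le_of_injective r hr
    simp at this
  obtain ⟨i, j, hij, hrij⟩ := Function.not_injective_iff.mp this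
  have h0 : F (fun i => g (r i)) = 0 :=
    F.map_eq_zero_of_eq _ (by rw [hij]) hrij
  rw [show F.toMultilinearMap (fun i => g (r i)) = F (fun i => g (r i)) from rfl, h0, smul_zero]
end

section
/- Let $D$ be a commutative domain, $\sigma$ an automorphism of $D$, and $a \in D$ nonzero. Then the rank-1 generalized Weyl algebra $D(a, \sigma)$, generated over $D$ by $X^+, X^-$ with relations $X^+ d = \sigma(d) X^+$, $X^- d = \sigma^{-1}(d) X^-$, $X^- X^+ = a$, $X^+ X^- = \sigma(a)$, is an integral domain. -/
section GWAaux

set_option linter.unusedSectionVars false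
variable {D : Type*} [CommRing D] [IsDomain D] {T : Type*} [Ring T]

private def GWAB (Xp Xm : T) (z : ℤ) : T :=
  if 0 ≤ z then Xp ^ z.toNat else Xm ^ (-z).toNat

private lemma GWAB_nonneg (Xp Xm : T) {z : ℤ} (hz : 0 ≤ z) :
    GWAB Xp Xm z = Xp ^ z.toNat := if_pos hz

private lemma GWAB_nonpos (Xp Xm : T) {z : ℤ} (hz : z ≤ 0) :
    GWAB Xp Xm z = Xm ^ (-z).toNat := by
  rcases eq_or_lt_of_le hz with h | h
  · subst h; simp [GWAB]
  · exact if_neg (not_le.mpr h)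

private lemma autNe (e : D ≃+* D) {d : D} (hd : d ≠ 0) : e d ≠ 0 := by
  intro h
  exact hd (e.injective (by simpa using h))

private lemma commP (σ : D ≃+* D) (ι : D →+* T) (Xp : T)
    (hXp : ∀ d : D, Xp * ι d = ι (σ d) * Xp) (j : ℕ) (d : D) :
    Xp ^ j * ι d = ι (((σ : RingAut D) ^ j) d) * Xp ^ j := by
  induction j generalizing d with
  | zero => simp
  | succ n ih =>
    rw [pow_succ, mul_assoc, hXp, ← mul_assoc, ih, mul_assoc, ← pow_succ]
    congr 2

private lemma commM (σ : D ≃+* D) (ι : D →+* T) (Xm : T)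
    (hXm : ∀ d : D, Xm * ι d = ι (σ.symm d) * Xm) (j : ℕ) (d : D) :
    Xm ^ j * ι d = ι (((σ : RingAut D)⁻¹ ^ j) d) * Xm ^ j := by
  induction j generalizing d with
  | zero => simp
  | succ n ih =>
    rw [pow_succ, mul_assoc, hXm, ← mul_assoc, ih, mul_assoc, ← pow_succ]
    congr 2

private lemma zpow_eq_pos (σ : D ≃+* D) {z : ℤ} (hz : 0 ≤ z) :
    (σ : RingAut D) ^ z = (σ : RingAut D) ^ z.toNat := by
  rw [← zpow_natCast, Int.toNat_of_nonneg hz]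

private lemma zpow_eq_neg (σ : D ≃+* D) {z : ℤ} (hz : z ≤ 0) :
    (σ : RingAut D) ^ z = (σ : RingAut D)⁻¹ ^ (-z).toNat := by
  rw [inv_pow, ← zpow_natCast, Int.toNat_of_nonneg (by omega), ← zpow_neg, neg_neg]

private lemma commB (σ : D ≃+* D) (ι : D →+* T) (Xp Xm : T)
    (hXp : ∀ d : D, Xp * ι d = ι (σ d) * Xp)
    (hXm : ∀ d : D, Xm * ι d = ι (σ.symm d) * Xm) (z : ℤ) (d : D) :
    GWAB Xp Xm z * ι d = ι (((σ : RingAut D) ^ z) d) * GWAB Xp Xm z := by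
  rcases le_or_gt 0 z with hz | hz
  · rw [GWAB_nonneg Xp Xm hz, commP σ ι Xp hXp, zpow_eq_pos σ hz]
  · rw [GWAB_nonpos Xp Xm hz.le, commM σ ι Xm hXm, zpow_eq_neg σ hz.le]

private lemma GWApm (σ : D ≃+* D) (a : D) (ι : D →+* T) (Xp Xm : T)
    (hXp : ∀ d : D, Xp * ι d = ι (σ d) * Xp)
    (hpm : Xp * Xm = ι (σ a)) (ha : a ≠ 0) (j : ℕ) :
    ∃ u : D, u ≠ 0 ∧ Xp ^ j * Xm ^ j = ι u := by
  induction j with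
  | zero => exact ⟨1, one_ne_zero, by simp⟩
  | succ n ih =>
    obtain ⟨u, hu, hequ⟩ := ih
    refine ⟨((σ : RingAut D) ^ n) (σ a) * u,
      mul_ne_zero (autNe _ (autNe σ ha)) hu, ?_⟩
    rw [pow_succ, pow_succ']
    calc Xp ^ n * Xp * (Xm * Xm ^ n) = Xp ^ n * (Xp * Xm) * Xm ^ n := by noncomm_ring
      _ = Xp ^ n * ι (σ a) * Xm ^ n := by rw [hpm]
      _ = ι (((σ : RingAut D) ^ n) (σ a)) * (Xp ^ n * Xm ^ n) := by
          rw [commP σ ι Xp hXp, mul_assoc]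
      _ = _ := by rw [hequ, ← map_mul]

private lemma GWAmp (σ : D ≃+* D) (a : D) (ι : D →+* T) (Xm Xp : T)
    (hXm : ∀ d : D, Xm * ι d = ι (σ.symm d) * Xm)
    (hmp : Xm * Xp = ι a) (ha : a ≠ 0) (j : ℕ) :
    ∃ u : D, u ≠ 0 ∧ Xm ^ j * Xp ^ j = ι u := by
  induction j with
  | zero => exact ⟨1, one_ne_zero, by simp⟩
  | succ n ih =>
    obtain ⟨u, hu, hequ⟩ := ih
    refine ⟨((σ : RingAut D)⁻¹ ^ n) a * u, mul_ne_zero (autNe _ ha) hu, ?_⟩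
    rw [pow_succ, pow_succ']
    calc Xm ^ n * Xm * (Xp * Xp ^ n) = Xm ^ n * (Xm * Xp) * Xp ^ n := by noncomm_ring
      _ = Xm ^ n * ι a * Xp ^ n := by rw [hmp]
      _ = ι (((σ : RingAut D)⁻¹ ^ n) a) * (Xm ^ n * Xp ^ n) := by
          rw [commM σ ι Xm hXm, mul_assoc]
      _ = _ := by rw [hequ, ← map_mul]

private lemma GWAmulB (σ : D ≃+* D) (a : D) (ι : D →+* T) (Xp Xm : T)
    (hXp : ∀ d : D, Xp * ι d = ι (σ d) * Xp)
    (hXm : ∀ d : D, Xm * ι d = ι (σ.symm d) * Xm)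
    (hmp : Xm * Xp = ι a) (hpm : Xp * Xm = ι (σ a)) (ha : a ≠ 0) (m n : ℤ) :
    ∃ u : D, u ≠ 0 ∧ GWAB Xp Xm m * GWAB Xp Xm n = ι u * GWAB Xp Xm (m + n) := by
  rcases le_or_gt 0 m with hm | hm <;> rcases le_or_gt 0 n with hn | hn
  · refine ⟨1, one_ne_zero, ?_⟩
    rw [GWAB_nonneg Xp Xm hm, GWAB_nonneg Xp Xm hn, GWAB_nonneg Xp Xm (by omega),
      map_one, one_mul, ← pow_add]
    congr 1
    omega
  · -- m ≥ 0, n < 0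
    set j := m.toNat with hj
    set k := (-n).toNat with hk
    rcases le_or_gt k j with hkj | hkj
    · obtain ⟨u, hu, hequ⟩ := GWApm σ a ι Xp Xm hXp hpm ha k
      refine ⟨((σ : RingAut D) ^ (j - k)) u, autNe _ hu, ?_⟩
      rw [GWAB_nonneg Xp Xm hm, GWAB_nonpos Xp Xm hn.le, GWAB_nonneg Xp Xm (by omega)]
      have h1 : Xp ^ j = Xp ^ (j - k) * Xp ^ k := by rw [← pow_add]; congr 1; omega
      have h2 : (m + n).toNat = j - k := by omega
      rw [← hj, ← hk, h1, h2, mul_assoc, hequ, commP σ ι Xp hXp]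
    · obtain ⟨u, hu, hequ⟩ := GWApm σ a ι Xp Xm hXp hpm ha j
      refine ⟨u, hu, ?_⟩
      rw [GWAB_nonneg Xp Xm hm, GWAB_nonpos Xp Xm hn.le, GWAB_nonpos Xp Xm (by omega)]
      have h1 : Xm ^ k = Xm ^ j * Xm ^ (k - j) := by rw [← pow_add]; congr 1; omega
      have h2 : (-(m + n)).toNat = k - j := by omega
      rw [← hj, ← hk, h1, h2, ← mul_assoc, hequ]
  · -- m < 0, n ≥ 0
    set j := (-m).toNat with hj
    set k := n.toNat with hk
    rcases le_or_gt j k with hjk | hjk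
    · obtain ⟨u, hu, hequ⟩ := GWAmp σ a ι Xm Xp hXm hmp ha j
      refine ⟨u, hu, ?_⟩
      rw [GWAB_nonpos Xp Xm hm.le, GWAB_nonneg Xp Xm hn, GWAB_nonneg Xp Xm (by omega)]
      have h1 : Xp ^ k = Xp ^ j * Xp ^ (k - j) := by rw [← pow_add]; congr 1; omega
      have h2 : (m + n).toNat = k - j := by omega
      rw [← hj, ← hk, h1, h2, ← mul_assoc, hequ]
    · obtain ⟨u, hu, hequ⟩ := GWAmp σ a ι Xm Xp hXm hmp ha k
      refine ⟨((σ : RingAut D)⁻¹ ^ (j - k)) u, autNe _ hu, ?_⟩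
      rw [GWAB_nonpos Xp Xm hm.le, GWAB_nonneg Xp Xm hn, GWAB_nonpos Xp Xm (by omega)]
      have h1 : Xm ^ j = Xm ^ (j - k) * Xm ^ k := by rw [← pow_add]; congr 1; omega
      have h2 : (-(m + n)).toNat = j - k := by omega
      rw [← hj, ← hk, h1, h2, mul_assoc, hequ]
      rw [commM σ ι Xm hXm]
  · refine ⟨1, one_ne_zero, ?_⟩
    rw [GWAB_nonpos Xp Xm hm.le, GWAB_nonpos Xp Xm hn.le, GWAB_nonpos Xp Xm (by omega),
      map_one, one_mul, ← pow_add]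
    congr 1
    omega

end GWAaux

/-- Let `D` be a commutative domain, `σ` an automorphism of `D` and `a ∈ D` nonzero. Then
the rank-one generalized Weyl algebra `D(a, σ)` (axiomatized: a ring `T` containing `D`
via `ι`, with elements `Xp`, `Xm` satisfying `Xp·d = σ(d)·Xp`, `Xm·d = σ⁻¹(d)·Xm`,
`Xm·Xp = a`, `Xp·Xm = σ(a)`, and free as a left `D`-module with basis
`{Xpⁿ}_{n≥0} ∪ {Xmⁿ}_{n≥1}`) is an integral domain. -/
theorem generalizedWeylAlgebra_isDomain (D : Type*) [CommRing D] [IsDomain D]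
    (σ : D ≃+* D) (a : D) (ha : a ≠ 0)
    (T : Type*) [Ring T] (ι : D →+* T) (Xp Xm : T)
    (hXp : ∀ d : D, Xp * ι d = ι (σ d) * Xp)
    (hXm : ∀ d : D, Xm * ι d = ι (σ.symm d) * Xm)
    (hmp : Xm * Xp = ι a) (hpm : Xp * Xm = ι (σ a))
    (hbasis : ∀ t : T, ∃! c : ℤ →₀ D,
      t = c.sum fun z d => ι d * (if 0 ≤ z then Xp ^ z.toNat else Xm ^ (-z).toNat)) :
    IsDomain T := by
  have hbasis' : ∀ t : T, ∃! c : ℤ →₀ D,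
      t = c.sum fun z d => ι d * GWAB Xp Xm z := hbasis
  set F : ℤ → D → T := fun z d => ι d * GWAB Xp Xm z with hF
  have hF0 : ∀ z : ℤ, F z 0 = 0 := fun z => by simp [hF]
  have hFadd : ∀ (z : ℤ) (b₁ b₂ : D), F z (b₁ + b₂) = F z b₁ + F z b₂ := fun z b₁ b₂ => by
    simp [hF, add_mul]
  have hnt : Nontrivial T := by
    by_contra h
    rw [not_nontrivial_iff_subsingleton] at h
    obtain ⟨c, -, hcu⟩ := hbasis' 0
    have h1 : (Finsupp.single (0 : ℤ) (1 : D)) = c := hcu _ (Subsingleton.elim _ _)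
    have h0 : (0 : ℤ →₀ D) = c :=
      hcu _ (show (0 : T) = (0 : ℤ →₀ D).sum F by rw [Finsupp.sum_zero_index])
    have h2 := h1.trans h0.symm
    rw [Finsupp.single_eq_zero] at h2
    exact one_ne_zero h2
  have hnzd : NoZeroDivisors T := by
    refine ⟨fun {x y} hxy => ?_⟩
    by_contra hcon
    push_neg at hcon
    obtain ⟨hx, hy⟩ := hcon
    obtain ⟨c, hc, -⟩ := hbasis' x
    obtain ⟨e, he, -⟩ := hbasis' y
    have hcne : c ≠ 0 := by rintro rfl; exact hx (by rw [hc, Finsupp.sum_zero_index])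
    have hene : e ≠ 0 := by rintro rfl; exact hy (by rw [he, Finsupp.sum_zero_index])
    choose u hu0 huB using GWAmulB σ a ι Xp Xm hXp hXm hmp hpm ha
    set v : ℤ → ℤ → D := fun z w => c z * ((σ : RingAut D) ^ z) (e w) * u z w with hv
    set f : ℤ →₀ D :=
      ∑ z ∈ c.support, ∑ w ∈ e.support, Finsupp.single (z + w) (v z w) with hfdef
    have step2 : ∀ (z : ℤ) (cz : D) (w : ℤ) (ew : D),
        F z cz * F w ew = F (z + w) (cz * ((σ : RingAut D) ^ z) ew * u z w) := by
      intro z cz w ew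
      simp only [hF]
      calc ι cz * GWAB Xp Xm z * (ι ew * GWAB Xp Xm w)
          = ι cz * (GWAB Xp Xm z * ι ew) * GWAB Xp Xm w := by noncomm_ring
        _ = ι cz * (ι (((σ : RingAut D) ^ z) ew) * GWAB Xp Xm z) * GWAB Xp Xm w := by
            rw [commB σ ι Xp Xm hXp hXm]
        _ = ι (cz * ((σ : RingAut D) ^ z) ew) * (GWAB Xp Xm z * GWAB Xp Xm w) := by
            simp [map_mul, mul_assoc]
        _ = ι (cz * ((σ : RingAut D) ^ z) ew) * (ι (u z w) * GWAB Xp Xm (z + w)) := by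
            rw [huB]
        _ = ι (cz * ((σ : RingAut D) ^ z) ew * u z w) * GWAB Xp Xm (z + w) := by
            simp [map_mul, mul_assoc]
    have hxyf : x * y = f.sum F := by
      rw [hc, he, Finsupp.sum, Finsupp.sum, Finset.sum_mul_sum, hfdef,
        ← Finsupp.sum_finset_sum_index hF0 hFadd]
      refine Finset.sum_congr rfl fun z hz => ?_
      rw [← Finsupp.sum_finset_sum_index hF0 hFadd]
      refine Finset.sum_congr rfl fun w hw => ?_
      rw [Finsupp.sum_single_index (hF0 _)]
      exact step2 z (c z) w (e w)
    have hcs : c.support.Nonempty := Finsupp.support_nonempty_iff.mpr hcne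
    have hes : e.support.Nonempty := Finsupp.support_nonempty_iff.mpr hene
    set M : ℤ := c.support.max' hcs with hM
    set N : ℤ := e.support.max' hes with hN
    have hMmem : M ∈ c.support := Finset.max'_mem _ _
    have hNmem : N ∈ e.support := Finset.max'_mem _ _
    have hfMN : f (M + N) = v M N := by
      rw [hfdef]
      rw [Finset.sum_apply']
      rw [Finset.sum_eq_single_of_mem M hMmem]
      · rw [Finset.sum_apply']
        rw [Finset.sum_eq_single_of_mem N hNmem]
        · exact Finsupp.single_eq_same
        · intro w hw hwN
          exact Finsupp.single_eq_of_ne (by omega)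
      · intro z hz hzM
        rw [Finset.sum_apply']
        refine Finset.sum_eq_zero fun w hw => ?_
        have hzle : z ≤ M := Finset.le_max' _ _ hz
        have hwle : w ≤ N := Finset.le_max' _ _ hw
        exact Finsupp.single_eq_of_ne (by omega)
    have hfz : f = 0 := by
      obtain ⟨c0, -, hc0u⟩ := hbasis' 0
      have h1 := hc0u f (show (0 : T) = f.sum F by rw [← hxyf, hxy])
      have h2 := hc0u 0 (show (0 : T) = (0 : ℤ →₀ D).sum F by rw [Finsupp.sum_zero_index])
      rw [h1, ← h2]
    have hvne : v M N ≠ 0 := by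
      refine mul_ne_zero (mul_ne_zero ?_ ?_) (hu0 M N)
      · exact Finsupp.mem_support_iff.mp hMmem
      · exact autNe _ (Finsupp.mem_support_iff.mp hNmem)
    exact hvne (by rw [← hfMN, hfz]; rfl)
  exact NoZeroDivisors.to_isDomain T
end
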